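/- Suppose n - d is even with 1 ≤ d ≤ n and gcd(s,n) = 1. Every nonzero element of S_{n,d,s} = { b_0 x + Σ_{i=1}^{(n-d)/2} ( b_i x^{q^{si}} + (b_i x)^{q^{s(n-i)}} ) : b_i ∈ F_{q^n} } has rank at least d as an F_q-linear endomorphism of F_{q^n}; hence S_{n,d,s} is an F_q-linear d-code of size q^{n(n-d+2)/2}. -/

import Mathlib

/-!
Let `σ = Frob^s`; since `gcd(s, n) = 1` its fixed field is `F_q`, and `σ^n = 1`. Applying `σ^m`
(`m = (n - d)/2`) to an element of `S_{n,d,s}` turns it into a σ-linearized polynomial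
`∑_{j ≤ 2m} c_j σ^j` whose coefficients are the `σ`-conjugates of the `b_i`. The kernel of a nonzero
σ-linearized polynomial `P` of σ-degree `k` has `F_q`-dimension at most `k`: for a root `u ≠ 0`,
Abel summation factors `x ↦ P(u x)` as `R ∘ (σ - 1)` with `R` of σ-degree `k - 1`, and
`ker (σ - 1) = F_q`. So kernels have dimension at most `2m = n - d`, which gives the rank bound, and
since `2m < n` no nonzero coefficient vector `(b_0, …, b_m)` gives the zero map, which gives the count.
-/

open Finset Module LinearMap FiniteField

theorem LinearMap.finrank_ker_comp_le {K V₁ V₂ V₃ : Type*} [DivisionRing K]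
    [AddCommGroup V₁] [Module K V₁] [AddCommGroup V₂] [Module K V₂] [AddCommGroup V₃] [Module K V₃]
    [FiniteDimensional K V₁] [FiniteDimensional K V₂] (f : V₂ →ₗ[K] V₃) (g : V₁ →ₗ[K] V₂) :
    finrank K (ker (f ∘ₗ g)) ≤ finrank K (ker f) + finrank K (ker g) := by
  set p := ker (f ∘ₗ g)
  have hrange : range (g.domRestrict p) ≤ ker f := by
    rintro _ ⟨x, rfl⟩
    exact x.2
  have hker : finrank K (ker (g.domRestrict p)) ≤ finrank K (ker g) := by
    rw [ker_domRestrict, ← Submodule.finrank_map_subtype_eq, Submodule.map_comap_subtype]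
    exact Submodule.finrank_mono inf_le_right
  have := finrank_range_add_finrank_ker (g.domRestrict p)
  have := Submodule.finrank_mono hrange
  omega

section Linearized

variable {K L : Type*} [Field K] [Field L] [Algebra K L]

def linearizedPoly (σ : L →ₐ[K] L) (c : ℕ → L) (N : ℕ) : L →ₗ[K] L :=
  ∑ j ∈ range N, c j • (σ ^ j).toLinearMap

variable {σ : L →ₐ[K] L}

@[simp]
lemma linearizedPoly_apply (c : ℕ → L) (N : ℕ) (x : L) :
    linearizedPoly σ c N x = ∑ j ∈ range N, c j * (σ ^ j) x := by
  simp [linearizedPoly]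

lemma linearizedPoly_succ_of_eq_zero {c : ℕ → L} {N : ℕ} (h : c N = 0) :
    linearizedPoly σ c (N + 1) = linearizedPoly σ c N := by
  simp [linearizedPoly, sum_range_succ, h]

/-- Abel summation, using that the coefficients `c j * σ^j u` sum to zero. -/
lemma linearizedPoly_mul_of_apply_eq_zero {c : ℕ → L} {k : ℕ} {u : L}
    (hu : linearizedPoly σ c (k + 1) u = 0) (y : L) :
    linearizedPoly σ c (k + 1) (u * y) =
      linearizedPoly σ (fun i ↦ -∑ j ∈ range (i + 1), c j * (σ ^ j) u) k (σ y - y) := by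
  rw [linearizedPoly_apply] at hu
  simp only [linearizedPoly_apply, map_mul, ← mul_assoc]
  have := sum_range_by_parts (fun j ↦ (σ ^ j) y) (fun j ↦ c j * (σ ^ j) u) (k + 1)
  simp only [smul_eq_mul, add_tsub_cancel_right, hu, mul_zero, zero_sub] at this
  simp_rw [mul_comm _ ((σ ^ _) y)]
  rw [this, ← sum_neg_distrib]
  refine sum_congr rfl fun i _ ↦ ?_
  rw [map_sub, ← AlgHom.mul_apply, ← pow_succ]
  ring

lemma finrank_ker_toLinearMap_sub_id_le (hfix : ∀ x, σ x = x → x ∈ Set.range (algebraMap K L)) :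
    finrank K (ker (σ.toLinearMap - LinearMap.id)) ≤ 1 := by
  calc finrank K (ker (σ.toLinearMap - LinearMap.id))
      ≤ finrank K (range (Algebra.linearMap K L)) := by
        refine Submodule.finrank_mono fun x hx ↦ ?_
        rw [mem_ker, LinearMap.sub_apply, sub_eq_zero] at hx
        obtain ⟨a, rfl⟩ := hfix x hx
        exact ⟨a, rfl⟩
    _ ≤ finrank K K := finrank_range_le _
    _ = 1 := finrank_self K

variable [FiniteDimensional K L]

theorem finrank_ker_linearizedPoly_le (hfix : ∀ x, σ x = x → x ∈ Set.range (algebraMap K L)) :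
    ∀ (k : ℕ) (c : ℕ → L), (∃ j ≤ k, c j ≠ 0) →
      finrank K (ker (linearizedPoly σ c (k + 1))) ≤ k
  | 0, c, ⟨j, hj, hcj⟩ => by
    obtain rfl : j = 0 := Nat.le_zero.mp hj
    have : ker (linearizedPoly σ c 1) = ⊥ :=
      ker_eq_bot'.mpr fun x hx ↦ by simpa [hcj] using hx
    simp [this]
  | k + 1, c, ⟨j, hj, hcj⟩ => by
    by_cases htop : c (k + 1) = 0
    · rw [linearizedPoly_succ_of_eq_zero htop]
      have hj : j ≤ k := by
        rcases hj.lt_or_eq with hj | rfl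
        · omega
        · exact absurd htop hcj
      exact (finrank_ker_linearizedPoly_le hfix k c ⟨j, hj, hcj⟩).trans k.le_succ
    set P := linearizedPoly σ c (k + 1 + 1)
    by_cases hker : ker P = ⊥
    · rw [hker, finrank_bot]
      exact Nat.zero_le _
    obtain ⟨u, hu, hu0⟩ := Submodule.exists_mem_ne_zero_of_ne_bot hker
    set d : ℕ → L := fun i ↦ -∑ j ∈ range (i + 1), c j * (σ ^ j) u
    have hd : d k ≠ 0 := by
      have := hu
      rw [mem_ker, linearizedPoly_apply, sum_range_succ, add_eq_zero_iff_neg_eq] at this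
      simp only [d, this]
      exact mul_ne_zero htop ((map_ne_zero _).mpr hu0)
    have hfactor : P = (linearizedPoly σ d (k + 1) ∘ₗ (σ.toLinearMap - LinearMap.id)) ∘ₗ
        mulLeft K u⁻¹ := by
      ext x
      rw [comp_apply, comp_apply, mulLeft_apply, LinearMap.sub_apply, AlgHom.toLinearMap_apply,
        id_apply, ← linearizedPoly_mul_of_apply_eq_zero hu, mul_inv_cancel_left₀ hu0]
    have hinj : ker (mulLeft K u⁻¹) = ⊥ :=
      ker_eq_bot.mpr (mul_right_injective₀ (inv_ne_zero hu0))
    calc finrank K (ker P)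
        ≤ finrank K (ker (linearizedPoly σ d (k + 1) ∘ₗ (σ.toLinearMap - LinearMap.id))) +
            finrank K (ker (mulLeft K u⁻¹)) := hfactor ▸ finrank_ker_comp_le _ _
      _ ≤ finrank K (ker (linearizedPoly σ d (k + 1))) +
            finrank K (ker (σ.toLinearMap - LinearMap.id)) := by
        rw [hinj, finrank_bot, add_zero]
        exact finrank_ker_comp_le _ _
      _ ≤ k + 1 := add_le_add (finrank_ker_linearizedPoly_le hfix k d ⟨k, le_rfl, hd⟩)
        (finrank_ker_toLinearMap_sub_id_le hfix)

end Linearized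

theorem Finset.sum_range_two_mul_add_one {M : Type*} [AddCommMonoid M] (f : ℕ → M) (m : ℕ) :
    ∑ j ∈ range (2 * m + 1), f j = f m + ∑ i ∈ Icc 1 m, (f (m - i) + f (m + i)) := by
  induction m generalizing f with
  | zero => simp
  | succ m ih =>
    rw [show 2 * (m + 1) + 1 = 2 * m + 1 + 1 + 1 by ring, sum_range_succ', sum_range_succ, ih,
      sum_Icc_succ_top (by omega), sum_add_distrib, sum_add_distrib]
    have h1 : ∑ i ∈ Icc 1 m, f (m - i + 1) = ∑ i ∈ Icc 1 m, f (m + 1 - i) :=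
      sum_congr rfl fun i hi ↦ by rw [mem_Icc] at hi; congr 1; omega
    have h2 : ∑ i ∈ Icc 1 m, f (m + i + 1) = ∑ i ∈ Icc 1 m, f (m + 1 + i) :=
      sum_congr rfl fun i _ ↦ by congr 1; omega
    rw [h1, h2, show m + 1 - (m + 1) = 0 by omega, show m + 1 + (m + 1) = 2 * m + 1 + 1 by ring]
    abel

section Schmidt

variable {K L : Type*} [Field K] [Field L] [Algebra K L] {σ : L →ₐ[K] L} {n m : ℕ}

def schmidtMap (σ : L →ₐ[K] L) (n m : ℕ) (b : ℕ → L) : L →ₗ[K] L :=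
  b 0 • LinearMap.id +
    ∑ i ∈ Icc 1 m, (b i • (σ ^ i).toLinearMap + (σ ^ (n - i)).toLinearMap ∘ₗ mulLeft K (b i))

@[simp]
lemma schmidtMap_apply (b : ℕ → L) (x : L) :
    schmidtMap σ n m b x = b 0 * x + ∑ i ∈ Icc 1 m, (b i * (σ ^ i) x + (σ ^ (n - i)) (b i * x)) := by
  simp [schmidtMap]

lemma schmidtMap_congr {b b' : ℕ → L} (h : ∀ i ≤ m, b i = b' i) :
    schmidtMap σ n m b = schmidtMap σ n m b' := by
  ext x
  simp only [schmidtMap_apply, h 0 (Nat.zero_le m)]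
  congr 1
  exact sum_congr rfl fun i hi ↦ by rw [h i (mem_Icc.mp hi).2]

lemma schmidtMap_sub (b b' : ℕ → L) :
    schmidtMap σ n m (b - b') = schmidtMap σ n m b - schmidtMap σ n m b' := by
  ext x
  simp only [schmidtMap_apply, Pi.sub_apply, LinearMap.sub_apply, sub_mul, map_sub]
  rw [← sub_add_sub_comm, ← sum_sub_distrib]
  congr 1
  exact sum_congr rfl fun i _ ↦ by abel

def schmidtTwist (σ : L →ₐ[K] L) (n m : ℕ) (b : ℕ → L) (j : ℕ) : L :=
  if m ≤ j then (σ ^ m) (b (j - m)) else (σ ^ (n + j)) (b (m - j))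

lemma pow_comp_schmidtMap (hσn : σ ^ n = 1) (hmn : m ≤ n) (b : ℕ → L) :
    (σ ^ m).toLinearMap ∘ₗ schmidtMap σ n m b =
      linearizedPoly σ (schmidtTwist σ n m b) (2 * m + 1) := by
  ext x
  rw [linearizedPoly_apply, sum_range_two_mul_add_one]
  simp only [comp_apply, AlgHom.toLinearMap_apply, schmidtMap_apply, map_add, map_sum, map_mul,
    ← AlgHom.mul_apply, ← pow_add, schmidtTwist, le_refl, if_true, Nat.sub_self]
  congr 1
  refine sum_congr rfl fun i hi ↦ ?_
  rw [mem_Icc] at hi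
  rw [if_neg (by omega), if_pos (by omega), Nat.add_sub_cancel_left, show m - (m - i) = i by omega,
    show m + (n - i) = n + (m - i) by omega, pow_add σ n, hσn, one_mul, add_comm]

variable [FiniteDimensional K L]

theorem finrank_ker_schmidtMap_le (hσn : σ ^ n = 1)
    (hfix : ∀ x, σ x = x → x ∈ Set.range (algebraMap K L)) (hmn : m ≤ n) {b : ℕ → L}
    (hb : ∃ i ≤ m, b i ≠ 0) : finrank K (ker (schmidtMap σ n m b)) ≤ 2 * m := by
  have hker : ker (schmidtMap σ n m b) =
      ker (linearizedPoly σ (schmidtTwist σ n m b) (2 * m + 1)) := by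
    rw [← pow_comp_schmidtMap hσn hmn, ker_comp_of_ker_eq_bot _ (ker_eq_bot.mpr (σ ^ m).injective)]
  rw [hker]
  obtain ⟨i, hi, hbi⟩ := hb
  refine finrank_ker_linearizedPoly_le hfix (2 * m) _ ⟨m + i, by omega, ?_⟩
  rw [schmidtTwist, if_pos (by omega), Nat.add_sub_cancel_left]
  exact (map_ne_zero _).mpr hbi

theorem schmidtMap_eq_zero_iff (hσn : σ ^ n = 1)
    (hfix : ∀ x, σ x = x → x ∈ Set.range (algebraMap K L)) (hmn : m ≤ n)
    (hm : 2 * m < finrank K L) {b : ℕ → L} :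
    schmidtMap σ n m b = 0 ↔ ∀ i ≤ m, b i = 0 := by
  refine ⟨fun h ↦ ?_, fun h ↦ ?_⟩
  · by_contra! hb
    have := finrank_ker_schmidtMap_le hσn hfix hmn hb
    rw [h, ker_zero, finrank_top] at this
    omega
  · rw [schmidtMap_congr (b' := 0) h]
    ext
    simp

theorem card_range_schmidtMap (hσn : σ ^ n = 1)
    (hfix : ∀ x, σ x = x → x ∈ Set.range (algebraMap K L)) (hmn : m ≤ n)
    (hm : 2 * m < finrank K L) :
    Nat.card (Set.range fun b ↦ ⇑(schmidtMap σ n m b)) = Nat.card L ^ (m + 1) := by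
  set G : (Fin (m + 1) → L) → L → L := fun t ↦ schmidtMap σ n m fun i ↦ t (Fin.ofNat (m + 1) i)
  have hrestrict : (fun b ↦ ⇑(schmidtMap σ n m b)) = G ∘ fun b j ↦ b j := by
    funext b
    refine congrArg _ (schmidtMap_congr fun i hi ↦ ?_)
    simp [Nat.mod_eq_of_lt (Nat.lt_succ_of_le hi)]
  have hsurj : Function.Surjective fun (b : ℕ → L) (j : Fin (m + 1)) ↦ b j :=
    fun t ↦ ⟨fun i ↦ t (Fin.ofNat (m + 1) i), funext fun j ↦ by simp⟩
  have hinj : Function.Injective G := by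
    intro t t' h
    have := (schmidtMap_eq_zero_iff hσn hfix hmn hm
      (b := (fun i ↦ t (Fin.ofNat (m + 1) i)) - fun i ↦ t' (Fin.ofNat (m + 1) i))).mp
      (by rw [schmidtMap_sub, sub_eq_zero]; exact DFunLike.coe_injective h)
    funext j
    simpa [sub_eq_zero] using this j (Nat.lt_succ_iff.mp j.2)
  rw [hrestrict, hsurj.range_comp, Nat.card_range_of_injective hinj, Nat.card_fun, Nat.card_fin]

end Schmidt

namespace FiniteField

variable (K L : Type*) [Field K] [Fintype K] [Field L] [Algebra K L]

lemma frobeniusAlgHom_pow_pow_apply (s j : ℕ) (x : L) :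
    ((frobeniusAlgHom K L ^ s) ^ j) x = x ^ Fintype.card K ^ (s * j) := by
  rw [← pow_mul, AlgHom.coe_pow, coe_frobeniusAlgHom, pow_iterate]

lemma schmidtMap_frobeniusAlgHom_pow_apply (s n m : ℕ) (b : ℕ → L) (x : L) :
    schmidtMap (frobeniusAlgHom K L ^ s) n m b x = b 0 * x + ∑ i ∈ Icc 1 m,
      (b i * x ^ Fintype.card K ^ (s * i) + (b i * x) ^ Fintype.card K ^ (s * (n - i))) := by
  simp [frobeniusAlgHom_pow_pow_apply]

variable [Finite L]

lemma frobeniusAlgHom_pow_finrank : frobeniusAlgHom K L ^ finrank K L = 1 := by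
  rw [← orderOf_frobeniusAlgHom]
  exact pow_orderOf_eq_one _

variable {K L}

theorem mem_range_algebraMap_of_frobeniusAlgHom_pow_apply_eq {s : ℕ}
    (hs : s.Coprime (finrank K L)) {x : L} (hx : (frobeniusAlgHom K L ^ s) x = x) :
    x ∈ Set.range (algebraMap K L) := by
  set Φ := frobeniusAlgEquivOfAlgebraic K L
  have htop : Subgroup.zpowers (Φ ^ s) = ⊤ := by
    rw [← Subgroup.card_eq_iff_eq_top, Nat.card_zpowers, IsGalois.card_aut_eq_finrank,
      ← orderOf_frobeniusAlgEquivOfAlgebraic K L]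
    exact Nat.Coprime.orderOf_pow (by rw [orderOf_frobeniusAlgEquivOfAlgebraic]; exact hs.symm)
  have hstab : Φ ^ s ∈ MulAction.stabilizer Gal(L/K) x := by
    rwa [MulAction.mem_stabilizer_iff, AlgEquiv.smul_def, AlgEquiv.coe_pow,
      coe_frobeniusAlgEquivOfAlgebraic, ← coe_frobeniusAlgHom, ← AlgHom.coe_pow]
  rw [IsGalois.mem_range_algebraMap_iff_fixed]
  exact fun f ↦ Subgroup.zpowers_le.mpr hstab (htop ▸ Subgroup.mem_top f)

end FiniteField

theorem stmt_15_general (q n d s : ℕ)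
    (hd1 : 1 ≤ d) (hdn : d ≤ n) (hpar : Even (n - d)) (hs : Nat.gcd s n = 1)
    (K F : Type) [Field K] [Fintype K] [Field F] [Fintype F] [Algebra K F]
    (hK : Fintype.card K = q) (hF : Fintype.card F = q ^ n) :
    (∀ φ : F →ₗ[K] F,
      (∃ b : ℕ → F, ∀ x : F,
        φ x = b 0 * x + ∑ i ∈ Finset.Icc 1 ((n - d) / 2),
          (b i * x ^ q ^ (s * i) + (b i * x) ^ q ^ (s * (n - i)))) →
      φ ≠ 0 → d ≤ Module.finrank K (LinearMap.range φ)) ∧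
    Nat.card {f : F → F | ∃ b : ℕ → F, ∀ x : F,
        f x = b 0 * x + ∑ i ∈ Finset.Icc 1 ((n - d) / 2),
          (b i * x ^ q ^ (s * i) + (b i * x) ^ q ^ (s * (n - i)))}
      = q ^ (n * (n - d + 2) / 2) := by
  subst hK
  have hfr : finrank K F = n := by
    have := card_eq_pow_finrank (K := K) (V := F)
    rw [hF] at this
    exact (Nat.pow_right_injective (Nat.succ_le_of_lt Fintype.one_lt_card) this).symm
  set σ := frobeniusAlgHom K F ^ s
  set m := (n - d) / 2
  have hσn : σ ^ n = 1 := by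
    rw [← pow_mul, mul_comm, pow_mul, ← hfr, frobeniusAlgHom_pow_finrank, one_pow]
  have hfix : ∀ x, σ x = x → x ∈ Set.range (algebraMap K F) := fun _ ↦
    mem_range_algebraMap_of_frobeniusAlgHom_pow_apply_eq (hfr ▸ hs)
  have hmn : m ≤ n := by omega
  have hm : 2 * m < finrank K F := by omega
  simp_rw [← schmidtMap_frobeniusAlgHom_pow_apply]
  constructor
  · rintro φ ⟨b, hb⟩ hφ
    obtain rfl : φ = schmidtMap σ n m b := LinearMap.ext hb
    have hbne : ∃ i ≤ m, b i ≠ 0 := by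
      by_contra! h
      exact hφ ((schmidtMap_eq_zero_iff hσn hfix hmn hm).mpr h)
    have := finrank_ker_schmidtMap_le hσn hfix hmn hbne
    have := finrank_range_add_finrank_ker (schmidtMap σ n m b)
    omega
  · have hset : {f : F → F | ∃ b : ℕ → F, ∀ x, f x = schmidtMap σ n m b x} =
        Set.range fun b ↦ ⇑(schmidtMap σ n m b) := by
      ext f
      simp [funext_iff, eq_comm]
    rw [hset, card_range_schmidtMap hσn hfix hmn hm, Nat.card_eq_fintype_card, hF, ← pow_mul]
    congr 1
    obtain ⟨r, hr⟩ := hpar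
    rw [show n - d + 2 = 2 * (m + 1) by omega, mul_left_comm, Nat.mul_div_cancel_left _ two_pos]

/-- Every nonzero element of the Schmidt code `S_{n,d,s}` has rank at least `d` as an
`F_q`-linear endomorphism of `F_{qⁿ}`; hence `S_{n,d,s}` is an `F_q`-linear `d`-code of
size `q^(n(n-d+2)/2)`. -/
theorem stmt_15 (q n d s : ℕ) (hq : IsPrimePow q) (hn : 0 < n)
    (hd1 : 1 ≤ d) (hdn : d ≤ n) (hpar : Even (n - d)) (hs : Nat.gcd s n = 1)
    (K F : Type) [Field K] [Fintype K] [Field F] [Fintype F] [Algebra K F]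
    (hK : Fintype.card K = q) (hF : Fintype.card F = q ^ n) :
    (∀ φ : F →ₗ[K] F,
      (∃ b : ℕ → F, ∀ x : F,
        φ x = b 0 * x + ∑ i ∈ Finset.Icc 1 ((n - d) / 2),
          (b i * x ^ q ^ (s * i) + (b i * x) ^ q ^ (s * (n - i)))) →
      φ ≠ 0 → d ≤ Module.finrank K (LinearMap.range φ)) ∧
    Nat.card {f : F → F | ∃ b : ℕ → F, ∀ x : F,
        f x = b 0 * x + ∑ i ∈ Finset.Icc 1 ((n - d) / 2),
          (b i * x ^ q ^ (s * i) + (b i * x) ^ q ^ (s * (n - i)))}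
      = q ^ (n * (n - d + 2) / 2) :=
  stmt_15_general q n d s hd1 hdn hpar hs K F hK hF
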